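/- arXiv:1510.03299 — 14 statements merged into one kernel-verified Lean document; each statement's English description precedes it below -/
import Mathlib

section
/- Let m ≥ 1, let M, I_S : Fin m → ℝ be probability vectors, and suppose I_S i > 0 for every i. For λ̂ ∈ (0,1], every entry of the vector l̂ defined by l̂ i = (1/λ̂)·M i + (1 − 1/λ̂)·I_S i is nonnegative if and only if λ̂ ≥ max_i (1 − M i / I_S i). -/
theorem nonneg_inv_mul_add_one_sub_inv_mul_iff {lam x y : ℝ} (hlam : 0 < lam) (hy : 0 < y) :
    0 ≤ (1 / lam) * x + (1 - 1 / lam) * y ↔ 1 - x / y ≤ lam := by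
  have hscale : (1 / lam) * x + (1 - 1 / lam) * y = (x - (1 - lam) * y) / lam := by
    field_simp
    ring
  rw [hscale, le_div_iff₀ hlam, zero_mul, sub_nonneg, ← le_div_iff₀ hy]
  exact sub_le_comm

theorem stmt_0_general (m : ℕ) (hm : 1 ≤ m) (M IS : Fin m → ℝ)
    (hISpos : ∀ i, 0 < IS i)
    (lam : ℝ) (hlam : lam ∈ Set.Ioc (0 : ℝ) 1) :
    (∀ i, 0 ≤ (1 / lam) * M i + (1 - 1 / lam) * IS i) ↔
      Finset.univ.sup'
        (Finset.univ_nonempty_iff.mpr (Fin.pos_iff_nonempty.mp hm))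
        (fun i => 1 - M i / IS i) ≤ lam := by
  simp only [Finset.sup'_le_iff, Finset.mem_univ, true_implies,
    nonneg_inv_mul_add_one_sub_inv_mul_iff hlam.1 (hISpos _)]

/-- For probability vectors `M`, `I_S` on `Fin m` (`m ≥ 1`) with `I_S i > 0`,
and `λ̂ ∈ (0,1]`, every entry of `l̂ i = (1/λ̂)·M i + (1 − 1/λ̂)·I_S i` is nonnegative
iff `λ̂ ≥ max_i (1 − M i / I_S i)`. -/
theorem stmt_0 (m : ℕ) (hm : 1 ≤ m) (M IS : Fin m → ℝ)
    (hMnn : ∀ i, 0 ≤ M i) (hMsum : ∑ i, M i = 1)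
    (hISpos : ∀ i, 0 < IS i) (hISsum : ∑ i, IS i = 1)
    (lam : ℝ) (hlam : lam ∈ Set.Ioc (0 : ℝ) 1) :
    (∀ i, 0 ≤ (1 / lam) * M i + (1 - 1 / lam) * IS i) ↔
      Finset.univ.sup'
        (Finset.univ_nonempty_iff.mpr (Fin.pos_iff_nonempty.mp hm))
        (fun i => 1 - M i / IS i) ≤ lam :=
  stmt_0_general m hm M IS hISpos lam hlam
end

section
/- (Lemma 1) Let m ≥ 1, let l and I_S be probability vectors on Fin m with I_S i > 0 for all i, let 0 < λ ≤ 1, and define M i = λ·l i + (1 − λ)·I_S i. If l j = 0 for some index j, then λ = max_i (1 − M i / I_S i), i.e., the true combination coefficient equals its lower bound λ_L. -/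
/-!
Since `1 - M i / IS i = λ · (1 - l i / IS i)` and `l i / IS i ≥ 0`, every term of the maximum is
at most `λ`, and the term at a zero entry of `l` equals `λ`.
-/

lemma one_sub_mixture_div (lam p q : ℝ) (hq : q ≠ 0) :
    1 - (lam * p + (1 - lam) * q) / q = lam * (1 - p / q) := by
  field_simp
  ring

theorem stmt_1_general (m : ℕ) (hm : 1 ≤ m) (l IS : Fin m → ℝ)
    (hlnn : ∀ i, 0 ≤ l i)
    (hISpos : ∀ i, 0 < IS i)
    (lam : ℝ) (hlam0 : 0 < lam)
    (M : Fin m → ℝ) (hM : ∀ i, M i = lam * l i + (1 - lam) * IS i)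
    (j : Fin m) (hj : l j = 0) :
    lam = Finset.univ.sup'
        (Finset.univ_nonempty_iff.mpr (Fin.pos_iff_nonempty.mp hm))
        (fun i => 1 - M i / IS i) := by
  have key (i : Fin m) : 1 - M i / IS i = lam * (1 - l i / IS i) := by
    rw [hM i, one_sub_mixture_div lam _ _ (hISpos i).ne']
  refine le_antisymm (Finset.le_sup'_of_le _ (Finset.mem_univ j) ?_)
    (Finset.sup'_le _ _ fun i _ => ?_)
  · rw [key j, hj, zero_div, sub_zero, mul_one]
  · rw [key i]
    exact mul_le_of_le_one_right hlam0.le (sub_le_self _ (div_nonneg (hlnn i) (hISpos i).le))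

/-- Lemma 1: If the desired distribution `l` has a zero entry, then the true
combination coefficient `λ` equals its lower bound `λ_L = max_i (1 − M i / I_S i)`,
where `M = λ·l + (1 − λ)·I_S`. -/
theorem stmt_1 (m : ℕ) (hm : 1 ≤ m) (l IS : Fin m → ℝ)
    (hlnn : ∀ i, 0 ≤ l i) (hlsum : ∑ i, l i = 1)
    (hISpos : ∀ i, 0 < IS i) (hISsum : ∑ i, IS i = 1)
    (lam : ℝ) (hlam0 : 0 < lam) (hlam1 : lam ≤ 1)
    (M : Fin m → ℝ) (hM : ∀ i, M i = lam * l i + (1 - lam) * IS i)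
    (j : Fin m) (hj : l j = 0) :
    lam = Finset.univ.sup'
        (Finset.univ_nonempty_iff.mpr (Fin.pos_iff_nonempty.mp hm))
        (fun i => 1 - M i / IS i) :=
  stmt_1_general m hm l IS hlnn hISpos lam hlam0 M hM j hj
end

section
/- (Proposition 1, minimum correlation) Let m ≥ 1 and let M, I_S : Fin m → ℝ be probability vectors. Set a = Σ_i (I_S i − 1/m)(M i − I_S i), b = Σ_i (I_S i − 1/m)², v = Σ_i (M i − I_S i)², and assume b > 0 and a² < b·v. For λ̂ > 0 define l̂_{λ̂} i = (1/λ̂)·M i + (1 − 1/λ̂)·I_S i. Then for all 0 < λ̂₁ < λ̂₂, the Pearson correlation coefficient satisfies ρ(l̂_{λ̂₁}, I_S) < ρ(l̂_{λ̂₂}, I_S); that is, as the coefficient λ̂ decreases, the correlation between DSM's output distribution and the seed irrelevance distribution decreases. -/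
/-- Pearson product-moment correlation coefficient of two vectors on `Fin m`
(with the convention that division by zero yields 0). -/
noncomputable def pearson {m : ℕ} (x y : Fin m → ℝ) : ℝ :=
  (∑ i, (x i - (∑ j, x j) / m) * (y i - (∑ j, y j) / m)) /
    (Real.sqrt (∑ i, (x i - (∑ j, x j) / m) ^ 2) *
      Real.sqrt (∑ i, (y i - (∑ j, y j) / m) ^ 2))

/-!
Centring at the common mean `1/m`, `λ̂ (l̂_λ̂ i - 1/m) = (M i - I_S i) + λ̂ (I_S i - 1/m)`, so
`ρ(l̂_λ̂, I_S) = N / √(N² + (b v - a²))` with `N = a + λ̂ b`, because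
`(v + 2 λ̂ a + λ̂² b) · b = N² + (b v - a²)`. Here `N` increases with `λ̂`, and for `D > 0` the map
`x ↦ x / √(x² + D) = sin (arctan (x / √D))` is strictly increasing.
-/

open Real

lemma strictMono_div_sqrt_sq_add {D : ℝ} (hD : 0 < D) :
    StrictMono fun x : ℝ => x / √(x ^ 2 + D) := by
  have hsD : 0 < √D := sqrt_pos.2 hD
  have h : ∀ x : ℝ, x / √(x ^ 2 + D) = sin (arctan (x / √D)) := by
    intro x
    rw [sin_arctan, div_pow, sq_sqrt hD.le, one_add_div hD.ne', sqrt_div' _ hD.le,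
      div_div_div_cancel_right₀ hsD.ne', add_comm]
  simp_rw [h]
  exact sin_arctan_strictMono.comp (strictMono_id.div_const hsD)

lemma pearson_mix_eq {m : ℕ} (M IS : Fin m → ℝ) (hMsum : ∑ i, M i = 1)
    (hISsum : ∑ i, IS i = 1) (a b v : ℝ)
    (ha : a = ∑ i, (IS i - 1 / m) * (M i - IS i))
    (hb : b = ∑ i, (IS i - 1 / m) ^ 2)
    (hv : v = ∑ i, (M i - IS i) ^ 2) {lam : ℝ} (hlam : 0 < lam) :
    pearson (fun i => (1 / lam) * M i + (1 - 1 / lam) * IS i) IS =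
      (a + lam * b) / √((a + lam * b) ^ 2 + (b * v - a ^ 2)) := by
  have hb0 : 0 ≤ b := hb ▸ Finset.sum_nonneg fun i _ => sq_nonneg _
  have hcenter : ∀ i, (1 / lam) * M i + (1 - 1 / lam) * IS i - 1 / m =
      (IS i - 1 / m) + (1 / lam) * (M i - IS i) := fun i => by ring
  have hsum : ∑ i, ((1 / lam) * M i + (1 - 1 / lam) * IS i) = 1 := by
    rw [Finset.sum_add_distrib, ← Finset.mul_sum, ← Finset.mul_sum, hMsum, hISsum]
    ring
  have hcov : ∑ i, ((IS i - 1 / m) + (1 / lam) * (M i - IS i)) * (IS i - 1 / m) =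
      b + a / lam := by
    rw [hb, ha, Finset.sum_div, ← Finset.sum_add_distrib]
    exact Finset.sum_congr rfl fun i _ => by ring
  have hvar : ∑ i, ((IS i - 1 / m) + (1 / lam) * (M i - IS i)) ^ 2 =
      b + 2 * a / lam + v / lam ^ 2 := by
    rw [hb, ha, hv, Finset.mul_sum, Finset.sum_div, Finset.sum_div, ← Finset.sum_add_distrib,
      ← Finset.sum_add_distrib]
    exact Finset.sum_congr rfl fun i _ => by ring
  have hsd : √(b + 2 * a / lam + v / lam ^ 2) * √b =
      √((a + lam * b) ^ 2 + (b * v - a ^ 2)) / lam := by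
    have hprod : (b + 2 * a / lam + v / lam ^ 2) * b =
        ((a + lam * b) ^ 2 + (b * v - a ^ 2)) / lam ^ 2 := by
      field_simp
      ring
    rw [← sqrt_mul' _ hb0, hprod, sqrt_div' _ (sq_nonneg lam), sqrt_sq hlam.le]
  simp only [pearson, hsum, hISsum, hcenter, hcov, hvar, ← hb, hsd]
  field_simp
  ring

theorem stmt_2_general (m : ℕ) (M IS : Fin m → ℝ)
    (hMsum : ∑ i, M i = 1)
    (hISsum : ∑ i, IS i = 1)
    (a b v : ℝ)
    (ha : a = ∑ i, (IS i - 1 / m) * (M i - IS i))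
    (hb : b = ∑ i, (IS i - 1 / m) ^ 2)
    (hv : v = ∑ i, (M i - IS i) ^ 2)
    (hbpos : 0 < b) (hav : a ^ 2 < b * v)
    (lam₁ lam₂ : ℝ) (h1 : 0 < lam₁) (h12 : lam₁ < lam₂) :
    pearson (fun i => (1 / lam₁) * M i + (1 - 1 / lam₁) * IS i) IS <
      pearson (fun i => (1 / lam₂) * M i + (1 - 1 / lam₂) * IS i) IS := by
  rw [pearson_mix_eq M IS hMsum hISsum a b v ha hb hv h1,
    pearson_mix_eq M IS hMsum hISsum a b v ha hb hv (h1.trans h12)]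
  exact strictMono_div_sqrt_sq_add (sub_pos.2 hav) (by gcongr)

/-- Proposition 1: as the coefficient `λ̂` decreases, the Pearson correlation
between DSM's output distribution `l̂_λ̂ = (1/λ̂)·M + (1 − 1/λ̂)·I_S` and the seed
irrelevance distribution `I_S` decreases. -/
theorem stmt_2 (m : ℕ) (hm : 1 ≤ m) (M IS : Fin m → ℝ)
    (hMnn : ∀ i, 0 ≤ M i) (hMsum : ∑ i, M i = 1)
    (hISnn : ∀ i, 0 ≤ IS i) (hISsum : ∑ i, IS i = 1)
    (a b v : ℝ)
    (ha : a = ∑ i, (IS i - 1 / m) * (M i - IS i))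
    (hb : b = ∑ i, (IS i - 1 / m) ^ 2)
    (hv : v = ∑ i, (M i - IS i) ^ 2)
    (hbpos : 0 < b) (hav : a ^ 2 < b * v)
    (lam₁ lam₂ : ℝ) (h1 : 0 < lam₁) (h12 : lam₁ < lam₂) :
    pearson (fun i => (1 / lam₁) * M i + (1 - 1 / lam₁) * IS i) IS <
      pearson (fun i => (1 / lam₂) * M i + (1 - 1 / lam₂) * IS i) IS :=
  stmt_2_general m M IS hMsum hISsum a b v ha hb hv hbpos hav lam₁ lam₂ h1 h12
end

section
/- Let m ≥ 1 and let M, I_S : Fin m → ℝ be probability vectors. Set a = Σ_i (I_S i − 1/m)(M i − I_S i) and b = Σ_i (I_S i − 1/m)², and assume a < 0 and b > 0. If λ̂ = −a/b and l̂ i = (1/λ̂)·M i + (1 − 1/λ̂)·I_S i, then Σ_i (l̂ i − 1/m)(I_S i − 1/m) = 0; consequently the Pearson correlation coefficient ρ(l̂, I_S) equals 0. -/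
open Finset

section AffineCombination

variable {ι : Type*} [Fintype ι]

theorem sum_affineCombination_sub_mul_sub (t c : ℝ) (x y : ι → ℝ) :
    ∑ i, (t * x i + (1 - t) * y i - c) * (y i - c) =
      t * ∑ i, (y i - c) * (x i - y i) + ∑ i, (y i - c) ^ 2 := by
  rw [mul_sum, ← sum_add_distrib]
  exact sum_congr rfl fun i _ => by ring

theorem sum_affineCombination_eq_one {x y : ι → ℝ} (hx : ∑ i, x i = 1) (hy : ∑ i, y i = 1)
    (t : ℝ) : ∑ i, (t * x i + (1 - t) * y i) = 1 := by
  rw [sum_add_distrib, ← mul_sum, ← mul_sum, hx, hy]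
  ring

end AffineCombination

theorem pearson_eq_zero_of_sum_eq_one {m : ℕ} {x y : Fin m → ℝ}
    (hx : ∑ i, x i = 1) (hy : ∑ i, y i = 1)
    (hcov : ∑ i, (x i - 1 / m) * (y i - 1 / m) = 0) : pearson x y = 0 := by
  rw [pearson, hx, hy, hcov, zero_div]

theorem stmt_4_general (m : ℕ) (M IS : Fin m → ℝ)
    (hMsum : ∑ i, M i = 1)
    (hISsum : ∑ i, IS i = 1)
    (a b : ℝ)
    (ha : a = ∑ i, (IS i - 1 / m) * (M i - IS i))
    (hb : b = ∑ i, (IS i - 1 / m) ^ 2)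
    (haneg : a < 0)
    (lam : ℝ) (hlam : lam = -a / b)
    (l : Fin m → ℝ) (hl : ∀ i, l i = (1 / lam) * M i + (1 - 1 / lam) * IS i) :
    (∑ i, (l i - 1 / m) * (IS i - 1 / m) = 0) ∧ pearson l IS = 0 := by
  have hl' : l = fun i => (1 / lam) * M i + (1 - 1 / lam) * IS i := funext hl
  have hinv : 1 / lam = -b / a := by rw [hlam, one_div, inv_div, div_neg, neg_div]
  have hcov : ∑ i, (l i - 1 / m) * (IS i - 1 / m) = 0 := by
    rw [hl', sum_affineCombination_sub_mul_sub, ← ha, ← hb, hinv,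
      div_mul_cancel₀ _ haneg.ne, neg_add_cancel]
  have hlsum : ∑ i, l i = 1 := by
    rw [hl']
    exact sum_affineCombination_eq_one hMsum hISsum _
  exact ⟨hcov, pearson_eq_zero_of_sum_eq_one hlsum hISsum hcov⟩

/-- at `λ̂ = −a/b` the covariance between DSM's output `l̂` and `I_S`
vanishes, hence so does the Pearson correlation coefficient. -/
theorem stmt_4 (m : ℕ) (hm : 1 ≤ m) (M IS : Fin m → ℝ)
    (hMnn : ∀ i, 0 ≤ M i) (hMsum : ∑ i, M i = 1)
    (hISnn : ∀ i, 0 ≤ IS i) (hISsum : ∑ i, IS i = 1)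
    (a b : ℝ)
    (ha : a = ∑ i, (IS i - 1 / m) * (M i - IS i))
    (hb : b = ∑ i, (IS i - 1 / m) ^ 2)
    (haneg : a < 0) (hbpos : 0 < b)
    (lam : ℝ) (hlam : lam = -a / b)
    (l : Fin m → ℝ) (hl : ∀ i, l i = (1 / lam) * M i + (1 - 1 / lam) * IS i) :
    (∑ i, (l i - 1 / m) * (IS i - 1 / m) = 0) ∧ pearson l IS = 0 :=
  stmt_4_general m M IS hMsum hISsum a b ha hb haneg lam hlam l hl
end

section
/- Let m ≥ 1 and let M, I_S : Fin m → ℝ be probability vectors. Set a = Σ_i (I_S i − 1/m)(M i − I_S i) and b = Σ_i (I_S i − 1/m)², and assume a < 0, b > 0, and λ_L ≤ −a/b ≤ 1, where λ_L = max_i (1 − M i / I_S i). Then λ̂* = −a/b solves the optimization problem min over λ̂ ∈ [λ_L, 1] of the squared Pearson correlation ρ(l̂_{λ̂}, I_S)², where l̂_{λ̂} i = (1/λ̂)·M i + (1 − 1/λ̂)·I_S i; indeed ρ(l̂_{λ̂*}, I_S)² = 0 ≤ ρ(l̂_{λ̂}, I_S)² for every λ̂ ∈ [λ_L, 1]. 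-/
theorem pearson_eq_zero_of_sum_mul_eq_zero {m : ℕ} {x y : Fin m → ℝ}
    (h : ∑ i, (x i - (∑ j, x j) / m) * (y i - (∑ j, y j) / m) = 0) : pearson x y = 0 := by
  rw [pearson, h, zero_div]

section Mixture

variable {ι : Type*} [Fintype ι] (x y : ι → ℝ) (c : ℝ)

theorem sum_mixture : ∑ i, (c * x i + (1 - c) * y i) = c * ∑ i, x i + (1 - c) * ∑ i, y i := by
  rw [Finset.sum_add_distrib, Finset.mul_sum, Finset.mul_sum]

theorem sum_mixture_sub_mul (μ : ℝ) :
    ∑ i, (c * x i + (1 - c) * y i - μ) * (y i - μ) =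
      ∑ i, (y i - μ) ^ 2 + c * ∑ i, (y i - μ) * (x i - y i) := by
  rw [Finset.mul_sum, ← Finset.sum_add_distrib]
  exact Finset.sum_congr rfl fun i _ => by ring

end Mixture

theorem pearson_mixture_eq_zero {m : ℕ} (M IS : Fin m → ℝ) (hM : ∑ i, M i = 1)
    (hIS : ∑ i, IS i = 1) (c : ℝ)
    (hc : ∑ i, (IS i - 1 / m) ^ 2 + c * ∑ i, (IS i - 1 / m) * (M i - IS i) = 0) :
    pearson (fun i => c * M i + (1 - c) * IS i) IS = 0 := by
  apply pearson_eq_zero_of_sum_mul_eq_zero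
  have hmean : ∑ i, (c * M i + (1 - c) * IS i) = 1 := by
    rw [sum_mixture, hM, hIS]
    ring
  rw [hmean, hIS, sum_mixture_sub_mul, hc]

theorem stmt_5_general (m : ℕ) (M IS : Fin m → ℝ)
    (hMsum : ∑ i, M i = 1)
    (hISsum : ∑ i, IS i = 1)
    (a b : ℝ)
    (ha : a = ∑ i, (IS i - 1 / m) * (M i - IS i))
    (hb : b = ∑ i, (IS i - 1 / m) ^ 2)
    (haneg : a < 0)
    (lamL : ℝ) :
    (pearson (fun i => (1 / (-a / b)) * M i + (1 - 1 / (-a / b)) * IS i) IS) ^ 2 = 0 ∧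
      ∀ lam : ℝ, lamL ≤ lam → lam ≤ 1 →
        0 ≤ (pearson (fun i => (1 / lam) * M i + (1 - 1 / lam) * IS i) IS) ^ 2 := by
  refine ⟨?_, fun lam _ _ => sq_nonneg _⟩
  have hcov : ∑ i, (IS i - 1 / m) ^ 2 + 1 / (-a / b) * ∑ i, (IS i - 1 / m) * (M i - IS i) = 0 := by
    rw [← ha, ← hb, one_div_div]
    field_simp [haneg.ne]
    ring
  rw [pearson_mixture_eq_zero M IS hMsum hISsum _ hcov, sq_eq_zero_iff]

/-- if `λ_L ≤ −a/b ≤ 1`, then `λ̂* = −a/b` minimizes the squared Pearson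
correlation `ρ(l̂_λ̂, I_S)²` over `λ̂ ∈ [λ_L, 1]`: indeed
`ρ(l̂_{λ̂*}, I_S)² = 0 ≤ ρ(l̂_λ̂, I_S)²` for every `λ̂ ∈ [λ_L, 1]`. -/
theorem stmt_5 (m : ℕ) (hm : 1 ≤ m) (M IS : Fin m → ℝ)
    (hMnn : ∀ i, 0 ≤ M i) (hMsum : ∑ i, M i = 1)
    (hISpos : ∀ i, 0 < IS i) (hISsum : ∑ i, IS i = 1)
    (a b : ℝ)
    (ha : a = ∑ i, (IS i - 1 / m) * (M i - IS i))
    (hb : b = ∑ i, (IS i - 1 / m) ^ 2)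
    (haneg : a < 0) (hbpos : 0 < b)
    (lamL : ℝ)
    (hlamL : lamL = Finset.univ.sup'
        (Finset.univ_nonempty_iff.mpr (Fin.pos_iff_nonempty.mp hm))
        (fun i => 1 - M i / IS i))
    (hL : lamL ≤ -a / b) (hU : -a / b ≤ 1) :
    (pearson (fun i => (1 / (-a / b)) * M i + (1 - 1 / (-a / b)) * IS i) IS) ^ 2 = 0 ∧
      ∀ lam : ℝ, lamL ≤ lam → lam ≤ 1 →
        0 ≤ (pearson (fun i => (1 / lam) * M i + (1 - 1 / lam) * IS i) IS) ^ 2 :=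
  stmt_5_general m M IS hMsum hISsum a b ha hb haneg lamL
end

section
/- (Proposition 2, maximum KL-divergence) Let m ≥ 1 and let M, I_S : Fin m → ℝ be probability vectors with I_S i > 0 for all i and M ≠ I_S. For ξ > 0 define l̂_ξ i = ξ·(M i − I_S i) + I_S i. If 0 < ξ₁ < ξ₂ and l̂_{ξ₂} i ≥ 0 for all i, then D(l̂_{ξ₁}, I_S) < D(l̂_{ξ₂}, I_S). Equivalently, as the coefficient λ̂ = 1/ξ decreases, the KL-divergence between DSM's output distribution and the seed irrelevance distribution I_S strictly increases. -/
/-!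
Write `φ x = x log x`, so that `KL p q = ∑ q i φ (p i / q i)`. The output at `ξ₁` is the point at
parameter `t = ξ₁ / ξ₂` of the segment from `I_S` to the output at `ξ₂`; along it the ratio
`p / q` moves linearly from `1`, so convexity of `φ` and `φ 1 = 0` give `KL₁ ≤ t · KL₂`. Strict Gibbs' inequality (`x - 1 < φ x` for `x ≠ 1`, summed with weights
`q i`) makes the larger divergence positive, hence the decrease by the factor `t < 1` is strict.
-/

/-- KL-divergence `D(p, q) = Σ_i p i · log(p i / q i)`. A summand with `p i = 0`
contributes `0 · log 0 = 0`, matching the usual convention. -/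
noncomputable def KL {m : ℕ} (p q : Fin m → ℝ) : ℝ :=
  ∑ i, p i * Real.log (p i / q i)

open Finset Real

lemma mul_log_one_add_mul_sub_le {t x : ℝ} (ht₀ : 0 ≤ t) (ht₁ : t ≤ 1) (hx : 0 ≤ x) :
    (1 + t * (x - 1)) * log (1 + t * (x - 1)) ≤ t * (x * log x) := by
  have h := convexOn_mul_log.2 (Set.mem_Ici.mpr zero_le_one) (Set.mem_Ici.mpr hx)
    (sub_nonneg.mpr ht₁) ht₀ (sub_add_cancel 1 t)
  simp only [smul_eq_mul, mul_one, log_one, mul_zero, zero_add] at h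
  rwa [show 1 - t + t * x = 1 + t * (x - 1) by ring] at h

namespace KL

variable {m : ℕ} {p q : Fin m → ℝ}

lemma eq_sum_mul_mul_log_div (hq : ∀ i, q i ≠ 0) :
    KL p q = ∑ i, q i * (p i / q i * log (p i / q i)) := by
  refine sum_congr rfl fun i _ => ?_
  rw [← mul_assoc, mul_div_cancel₀ _ (hq i)]

lemma le_mul_of_lineMap {t : ℝ} (hp : ∀ i, 0 ≤ p i) (hq : ∀ i, 0 < q i)
    (ht₀ : 0 ≤ t) (ht₁ : t ≤ 1) :
    KL (fun i => q i + t * (p i - q i)) q ≤ t * KL p q := by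
  have hq' i := (hq i).ne'
  rw [eq_sum_mul_mul_log_div hq', eq_sum_mul_mul_log_div hq', mul_sum]
  refine sum_le_sum fun i _ => ?_
  have hratio : (q i + t * (p i - q i)) / q i = 1 + t * (p i / q i - 1) := by
    field_simp [hq' i]
  rw [hratio, mul_left_comm t]
  exact mul_le_mul_of_nonneg_left
    (mul_log_one_add_mul_sub_le ht₀ ht₁ (div_nonneg (hp i) (hq i).le)) (hq i).le

lemma pos (hp : ∀ i, 0 ≤ p i) (hq : ∀ i, 0 < q i) (hsum : ∑ i, p i = ∑ i, q i)
    (hpq : p ≠ q) : 0 < KL p q := by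
  have hq' i := (hq i).ne'
  obtain ⟨j, hj⟩ := Function.ne_iff.mp hpq
  have hmass : ∑ i, q i * (p i / q i - 1) = 0 := by
    simp_rw [mul_sub, mul_div_cancel₀ _ (hq' _), mul_one]
    rw [sum_sub_distrib, hsum, sub_self]
  rw [eq_sum_mul_mul_log_div hq', ← hmass]
  refine sum_lt_sum (fun i _ => ?_) ⟨j, mem_univ j, ?_⟩
  · exact mul_le_mul_of_nonneg_left
      (self_sub_one_le_mul_log (div_nonneg (hp i) (hq i).le)) (hq i).le
  · refine mul_lt_mul_of_pos_left
      (self_sub_one_lt_mul_log (div_nonneg (hp j) (hq j).le) ?_) (hq j)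
    rwa [Ne, div_eq_one_iff_eq (hq' j)]

end KL

theorem stmt_6_general (m : ℕ) (M IS : Fin m → ℝ)
    (hMsum : ∑ i, M i = 1)
    (hISpos : ∀ i, 0 < IS i) (hISsum : ∑ i, IS i = 1)
    (hne : M ≠ IS)
    (xi₁ xi₂ : ℝ) (h1 : 0 < xi₁) (h12 : xi₁ < xi₂)
    (hnn : ∀ i, 0 ≤ xi₂ * (M i - IS i) + IS i) :
    KL (fun i => xi₁ * (M i - IS i) + IS i) IS <
      KL (fun i => xi₂ * (M i - IS i) + IS i) IS := by
  set l₂ : Fin m → ℝ := fun i => xi₂ * (M i - IS i) + IS i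
  have h2 : 0 < xi₂ := h1.trans h12
  have hl₁ : (fun i => xi₁ * (M i - IS i) + IS i)
      = fun i => IS i + xi₁ / xi₂ * (l₂ i - IS i) := by
    funext i
    field_simp
    ring
  have hsum : ∑ i, l₂ i = ∑ i, IS i := by
    simp only [l₂, sum_add_distrib, ← mul_sum, sum_sub_distrib, hMsum, hISsum, sub_self,
      mul_zero, zero_add]
  have hl₂ : l₂ ≠ IS := fun h => hne <| funext fun i => by
    have := congrFun h i
    simp only [l₂, add_eq_right, mul_eq_zero, h2.ne', false_or, sub_eq_zero] at this
    exact this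
  rw [hl₁]
  calc KL (fun i => IS i + xi₁ / xi₂ * (l₂ i - IS i)) IS
      ≤ xi₁ / xi₂ * KL l₂ IS :=
        KL.le_mul_of_lineMap hnn hISpos (div_pos h1 h2).le ((div_le_one h2).mpr h12.le)
    _ < KL l₂ IS :=
        mul_lt_of_lt_one_left (KL.pos hnn hISpos hsum hl₂) ((div_lt_one h2).mpr h12)

/-- Proposition 2: as `λ̂ = 1/ξ` decreases (i.e. `ξ` increases), the
KL-divergence between DSM's output `l̂_ξ = ξ·(M − I_S) + I_S` and `I_S` strictly increases. -/
theorem stmt_6 (m : ℕ) (hm : 1 ≤ m) (M IS : Fin m → ℝ)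
    (hMnn : ∀ i, 0 ≤ M i) (hMsum : ∑ i, M i = 1)
    (hISpos : ∀ i, 0 < IS i) (hISsum : ∑ i, IS i = 1)
    (hne : M ≠ IS)
    (xi₁ xi₂ : ℝ) (h1 : 0 < xi₁) (h12 : xi₁ < xi₂)
    (hnn : ∀ i, 0 ≤ xi₂ * (M i - IS i) + IS i) :
    KL (fun i => xi₁ * (M i - IS i) + IS i) IS <
      KL (fun i => xi₂ * (M i - IS i) + IS i) IS :=
  stmt_6_general m M IS hMsum hISpos hISsum hne xi₁ xi₂ h1 h12 hnn
end

section
/- Let m ≥ 1 and let M, I_S : Fin m → ℝ be probability vectors with I_S i > 0 for all i and M ≠ I_S. Let ξ > 0 and suppose l̂_ξ i = ξ·(M i − I_S i) + I_S i > 0 for all i. Then Σ_i (M i − I_S i)·log(l̂_ξ i / I_S i) > 0; that is, the derivative with respect to ξ of the KL-divergence D(l̂_ξ, I_S) is strictly positive. -/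
/-! Since `l̂_ξ − I_S = ξ • (M − I_S)`, the sum is `ξ⁻¹` times the symmetrised (Jeffreys) divergence
`Σ_i (l̂_ξ i − I_S i) · log (l̂_ξ i / I_S i)` of `l̂_ξ` and `I_S`. Each of its terms is nonnegative because
`log` is increasing, and a term is strictly positive as soon as `l̂_ξ i ≠ I_S i`, which happens for
some `i` because `M ≠ I_S` and `ξ ≠ 0`. -/

open Real Finset

lemma sub_mul_log_div_pos {a b : ℝ} (ha : 0 < a) (hb : 0 < b) (hab : a ≠ b) :
    0 < (a - b) * log (a / b) := by
  rw [log_div ha.ne' hb.ne']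
  rcases hab.lt_or_gt with h | h
  · exact mul_pos_of_neg_of_neg (sub_neg.2 h) (sub_neg.2 (log_lt_log ha h))
  · exact mul_pos (sub_pos.2 h) (sub_pos.2 (log_lt_log hb h))

lemma sub_mul_log_div_nonneg {a b : ℝ} (ha : 0 < a) (hb : 0 < b) :
    0 ≤ (a - b) * log (a / b) := by
  rcases eq_or_ne a b with rfl | hab
  · simp
  · exact (sub_mul_log_div_pos ha hb hab).le

lemma sum_sub_mul_log_div_pos {ι : Type*} [Fintype ι] {p q : ι → ℝ} (hp : ∀ i, 0 < p i)
    (hq : ∀ i, 0 < q i) (hpq : p ≠ q) :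
    0 < ∑ i, (p i - q i) * log (p i / q i) := by
  obtain ⟨j, hj⟩ := Function.ne_iff.1 hpq
  exact sum_pos' (fun i _ => sub_mul_log_div_nonneg (hp i) (hq i))
    ⟨j, mem_univ j, sub_mul_log_div_pos (hp j) (hq j) hj⟩

theorem stmt_8_general (m : ℕ) (M IS : Fin m → ℝ)
    (hISpos : ∀ i, 0 < IS i)
    (hne : M ≠ IS)
    (xi : ℝ) (hxi : 0 < xi)
    (l : Fin m → ℝ) (hl : ∀ i, l i = xi * (M i - IS i) + IS i)
    (hlpos : ∀ i, 0 < l i) :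
    0 < ∑ i, (M i - IS i) * Real.log (l i / IS i) := by
  have hl_ne : l ≠ IS := by
    intro h
    refine hne (funext fun i => ?_)
    have : xi * (M i - IS i) = 0 := by linarith [hl i, congrFun h i]
    linarith [(mul_eq_zero.1 this).resolve_left hxi.ne']
  have hterm : ∀ i, (M i - IS i) * log (l i / IS i)
      = xi⁻¹ * ((l i - IS i) * log (l i / IS i)) := by
    intro i
    rw [hl i]
    field_simp
    ring
  rw [sum_congr rfl fun i _ => hterm i, ← mul_sum]
  exact mul_pos (inv_pos.2 hxi) (sum_sub_mul_log_div_pos hlpos hISpos hl_ne)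

/-- the derivative with respect to `ξ` of the KL-divergence `D(l̂_ξ, I_S)`,
namely `Σ_i (M i − I_S i)·log(l̂_ξ i / I_S i)`, is strictly positive. -/
theorem stmt_8 (m : ℕ) (hm : 1 ≤ m) (M IS : Fin m → ℝ)
    (hMnn : ∀ i, 0 ≤ M i) (hMsum : ∑ i, M i = 1)
    (hISpos : ∀ i, 0 < IS i) (hISsum : ∑ i, IS i = 1)
    (hne : M ≠ IS)
    (xi : ℝ) (hxi : 0 < xi)
    (l : Fin m → ℝ) (hl : ∀ i, l i = xi * (M i - IS i) + IS i)
    (hlpos : ∀ i, 0 < l i) :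
    0 < ∑ i, (M i - IS i) * Real.log (l i / IS i) :=
  stmt_8_general m M IS hISpos hne xi hxi l hl hlpos
end

section
/- (Proposition 3, maximum symmetrized KL-divergence) Let m ≥ 1 and let M, I_S : Fin m → ℝ be probability vectors with I_S i > 0 for all i and M ≠ I_S. For ξ > 0 define l̂_ξ i = ξ·(M i − I_S i) + I_S i. If 0 < ξ₁ < ξ₂ and l̂_{ξ₂} i > 0 for all i, then the symmetrized KL-divergence satisfies D(l̂_{ξ₁}, I_S) + D(I_S, l̂_{ξ₁}) < D(l̂_{ξ₂}, I_S) + D(I_S, l̂_{ξ₂}). Equivalently, as the coefficient λ̂ = 1/ξ decreases, the symmetrized KL-divergence between DSM's output distribution and the seed irrelevance distribution strictly increases. -/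
open Real Finset

theorem KL_add_KL_swap {m : ℕ} (p q : Fin m → ℝ) :
    KL p q + KL q p = ∑ i, (p i - q i) * log (p i / q i) := by
  rw [KL, KL, ← sum_add_distrib]
  refine sum_congr rfl fun i _ => ?_
  rw [← inv_div, log_inv]
  ring

section MulLog

variable {q : ℝ}

theorem strictMonoOn_mul_log_add_div (hq : 0 < q) :
    StrictMonoOn (fun x => x * log ((x + q) / q)) (Set.Ici 0) := by
  intro a (ha : 0 ≤ a) b _ hab
  have hba : (a + q) / q < (b + q) / q := by gcongr
  have hla : 0 ≤ log ((a + q) / q) :=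
    log_nonneg ((one_le_div hq).mpr (by linarith))
  exact mul_lt_mul'' hab (log_lt_log (by positivity) hba) ha hla

theorem strictAntiOn_mul_log_add_div (hq : 0 < q) :
    StrictAntiOn (fun x => x * log ((x + q) / q)) (Set.Ioc (-q) 0) := by
  rintro a ⟨ha, -⟩ b ⟨-, hb⟩ hab
  have hab' : (a + q) / q < (b + q) / q := by gcongr
  have hlb : log ((b + q) / q) ≤ 0 :=
    log_nonpos (div_nonneg (by linarith) hq.le) ((div_le_one hq).mpr (by linarith))
  have hla : 0 < (a + q) / q := div_pos (by linarith) hq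
  simpa only [neg_mul_neg] using mul_lt_mul'' (neg_lt_neg hab)
    (neg_lt_neg (log_lt_log hla hab')) (neg_nonneg.mpr hb) (neg_nonneg.mpr hlb)

theorem mul_log_add_div_lt_of_lt {d ξ₁ ξ₂ : ℝ} (hq : 0 < q) (hd : d ≠ 0) (hξ₁ : 0 < ξ₁)
    (hξ : ξ₁ < ξ₂) (hpos : 0 < ξ₂ * d + q) :
    ξ₁ * d * log ((ξ₁ * d + q) / q) < ξ₂ * d * log ((ξ₂ * d + q) / q) := by
  rcases hd.lt_or_gt with hd | hd
  · have hξd : ξ₂ * d < ξ₁ * d := mul_lt_mul_of_neg_right hξ hd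
    exact strictAntiOn_mul_log_add_div hq
      ⟨by linarith, (mul_neg_of_pos_of_neg (hξ₁.trans hξ) hd).le⟩
      ⟨by linarith, (mul_neg_of_pos_of_neg hξ₁ hd).le⟩ hξd
  · exact strictMonoOn_mul_log_add_div hq (mul_pos hξ₁ hd).le
      (mul_pos (hξ₁.trans hξ) hd).le (mul_lt_mul_of_pos_right hξ hd)

end MulLog

theorem stmt_9_general (m : ℕ) (M IS : Fin m → ℝ)
    (hISpos : ∀ i, 0 < IS i)
    (hne : M ≠ IS)
    (xi₁ xi₂ : ℝ) (h1 : 0 < xi₁) (h12 : xi₁ < xi₂)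
    (hpos : ∀ i, 0 < xi₂ * (M i - IS i) + IS i) :
    KL (fun i => xi₁ * (M i - IS i) + IS i) IS +
        KL IS (fun i => xi₁ * (M i - IS i) + IS i) <
      KL (fun i => xi₂ * (M i - IS i) + IS i) IS +
        KL IS (fun i => xi₂ * (M i - IS i) + IS i) := by
  simp only [KL_add_KL_swap, add_sub_cancel_right]
  have hterm : ∀ i, M i - IS i ≠ 0 →
      xi₁ * (M i - IS i) * log ((xi₁ * (M i - IS i) + IS i) / IS i) <
        xi₂ * (M i - IS i) * log ((xi₂ * (M i - IS i) + IS i) / IS i) := fun i hi =>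
    mul_log_add_div_lt_of_lt (hISpos i) hi h1 h12 (hpos i)
  obtain ⟨j, hj⟩ := Function.ne_iff.mp hne
  refine sum_lt_sum (fun i _ => ?_) ⟨j, mem_univ j, hterm j (sub_ne_zero.mpr hj)⟩
  rcases eq_or_ne (M i - IS i) 0 with hi | hi
  · simp [hi]
  · exact (hterm i hi).le

/-- Proposition 3: as `λ̂ = 1/ξ` decreases (i.e. `ξ` increases), the
symmetrized KL-divergence between DSM's output `l̂_ξ = ξ·(M − I_S) + I_S` and `I_S`
strictly increases. -/
theorem stmt_9 (m : ℕ) (hm : 1 ≤ m) (M IS : Fin m → ℝ)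
    (hMnn : ∀ i, 0 ≤ M i) (hMsum : ∑ i, M i = 1)
    (hISpos : ∀ i, 0 < IS i) (hISsum : ∑ i, IS i = 1)
    (hne : M ≠ IS)
    (xi₁ xi₂ : ℝ) (h1 : 0 < xi₁) (h12 : xi₁ < xi₂)
    (hpos : ∀ i, 0 < xi₂ * (M i - IS i) + IS i) :
    KL (fun i => xi₁ * (M i - IS i) + IS i) IS +
        KL IS (fun i => xi₁ * (M i - IS i) + IS i) <
      KL (fun i => xi₂ * (M i - IS i) + IS i) IS +
        KL IS (fun i => xi₂ * (M i - IS i) + IS i) :=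
  stmt_9_general m M IS hISpos hne xi₁ xi₂ h1 h12 hpos
end

section
/- Let m ≥ 1 and let M, I_S : Fin m → ℝ be probability vectors with I_S i > 0 for all i and M ≠ I_S. For ξ > 0 define l̂_ξ i = ξ·(M i − I_S i) + I_S i. If 0 < ξ₁ < ξ₂ and l̂_{ξ₂} i > 0 for all i, then the reverse KL-divergence satisfies D(I_S, l̂_{ξ₁}) < D(I_S, l̂_{ξ₂}). -/
/-! With `t = ξ₁ / ξ₂ ∈ (0, 1)` we have `l̂_{ξ₁} = t • l̂_{ξ₂} + (1 - t) • I_S`. Since `q ↦ D(I_S, q)` is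
strictly convex on the positive orthant (strict concavity of `log`) and vanishes at `I_S`,
`D(I_S, l̂_{ξ₁}) < t · D(I_S, l̂_{ξ₂}) ≤ D(I_S, l̂_{ξ₂})`, the last step by Gibbs' inequality
`D(I_S, l̂_{ξ₂}) ≥ 0`, which holds because `l̂_{ξ₂}` has the same total mass as `I_S`. -/

open Real Finset

theorem sub_le_mul_log_div {a b : ℝ} (ha : 0 ≤ a) (hb : 0 < b) : a - b ≤ a * log (a / b) := by
  rcases ha.eq_or_lt with rfl | ha
  · simpa using hb.le
  · have := mul_le_mul_of_nonneg_left (one_sub_inv_le_log_of_pos (div_pos ha hb)) ha.le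
    rwa [inv_div, mul_one_sub, mul_div_cancel₀ _ ha.ne'] at this

theorem KL_self {m : ℕ} (p : Fin m → ℝ) : KL p p = 0 := by
  simp [KL]

theorem KL_nonneg {m : ℕ} {p q : Fin m → ℝ} (hp : ∀ i, 0 ≤ p i) (hq : ∀ i, 0 < q i)
    (hsum : ∑ i, q i ≤ ∑ i, p i) : 0 ≤ KL p q :=
  calc 0 ≤ ∑ i, (p i - q i) := by rw [sum_sub_distrib]; linarith
    _ ≤ KL p q := sum_le_sum fun i _ => sub_le_mul_log_div (hp i) (hq i)

theorem KL_eq_sum_sub {m : ℕ} {p q : Fin m → ℝ} (hp : ∀ i, 0 < p i) (hq : ∀ i, 0 < q i) :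
    KL p q = ∑ i, p i * log (p i) - ∑ i, p i * log (q i) := by
  rw [KL, ← sum_sub_distrib]
  refine sum_congr rfl fun i _ => ?_
  rw [log_div (hp i).ne' (hq i).ne', mul_sub]

theorem strictConvexOn_KL {m : ℕ} {p : Fin m → ℝ} (hp : ∀ i, 0 < p i) :
    StrictConvexOn ℝ (Set.univ.pi fun _ => Set.Ioi 0) (KL p) := by
  refine ⟨convex_pi fun _ _ => convex_Ioi 0, fun x hx y hy hxy a b ha hb hab => ?_⟩
  simp only [Set.mem_pi, Set.mem_univ, Set.mem_Ioi, forall_const] at hx hy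
  have hxy' : ∀ i, 0 < (a • x + b • y) i := fun i => by
    have := hx i; have := hy i
    simp only [Pi.add_apply, Pi.smul_apply, smul_eq_mul]; positivity
  obtain ⟨j, hj⟩ := Function.ne_iff.mp hxy
  have hlog : ∀ i, a * log (x i) + b * log (y i) ≤ log ((a • x + b • y) i) := fun i =>
    (strictConcaveOn_log_Ioi.concaveOn).2 (hx i) (hy i) ha.le hb.le hab
  have hlogj : a * log (x j) + b * log (y j) < log ((a • x + b • y) j) :=
    strictConcaveOn_log_Ioi.2 (hx j) (hy j) hj ha hb hab
  have key : a * ∑ i, p i * log (x i) + b * ∑ i, p i * log (y i) <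
      ∑ i, p i * log ((a • x + b • y) i) := by
    rw [mul_sum, mul_sum, ← sum_add_distrib]
    refine sum_lt_sum (fun i _ => ?_) ⟨j, mem_univ j, ?_⟩
    · nlinarith [hlog i, hp i]
    · nlinarith [hlogj, hp j]
  rw [KL_eq_sum_sub hp hxy', KL_eq_sum_sub hp hx, KL_eq_sum_sub hp hy, smul_eq_mul, smul_eq_mul]
  linear_combination key - hab * ∑ i, p i * log (p i)

theorem stmt_10_general (m : ℕ) (M IS : Fin m → ℝ)
    (hMsum : ∑ i, M i = 1)
    (hISpos : ∀ i, 0 < IS i) (hISsum : ∑ i, IS i = 1)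
    (hne : M ≠ IS)
    (xi₁ xi₂ : ℝ) (h1 : 0 < xi₁) (h12 : xi₁ < xi₂)
    (hpos : ∀ i, 0 < xi₂ * (M i - IS i) + IS i) :
    KL IS (fun i => xi₁ * (M i - IS i) + IS i) <
      KL IS (fun i => xi₂ * (M i - IS i) + IS i) := by
  set l₂ : Fin m → ℝ := fun i => xi₂ * (M i - IS i) + IS i
  have h2 : 0 < xi₂ := h1.trans h12
  set t := xi₁ / xi₂
  have ht0 : 0 < t := div_pos h1 h2
  have ht1 : t < 1 := (div_lt_one h2).mpr h12
  have hl₁ : (fun i => xi₁ * (M i - IS i) + IS i) = t • l₂ + (1 - t) • IS := by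
    ext i; simp only [l₂, t, Pi.add_apply, Pi.smul_apply, smul_eq_mul]; field_simp; ring
  have hl₂ne : l₂ ≠ IS := fun h => hne <| funext fun i => by
    have : xi₂ * (M i - IS i) = 0 := by linarith [congrFun h i]
    linarith [(mul_eq_zero.mp this).resolve_left h2.ne']
  have hl₂sum : ∑ i, l₂ i = ∑ i, IS i := by
    simp only [l₂, sum_add_distrib, ← mul_sum, sum_sub_distrib, hMsum, hISsum]; ring
  have hgibbs : 0 ≤ KL IS l₂ := KL_nonneg (fun i => (hISpos i).le) hpos hl₂sum.le
  rw [hl₁]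
  calc KL IS (t • l₂ + (1 - t) • IS)
      < t * KL IS l₂ + (1 - t) * KL IS IS :=
        (strictConvexOn_KL hISpos).2 (by simpa using hpos) (by simpa using hISpos)
          hl₂ne ht0 (by linarith) (by ring)
    _ ≤ KL IS l₂ := by rw [KL_self]; nlinarith

/-- the reverse KL-divergence `D(I_S, l̂_ξ)` strictly increases in `ξ`:
for `0 < ξ₁ < ξ₂` with `l̂_{ξ₂}` entrywise positive, `D(I_S, l̂_{ξ₁}) < D(I_S, l̂_{ξ₂})`. -/
theorem stmt_10 (m : ℕ) (hm : 1 ≤ m) (M IS : Fin m → ℝ)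
    (hMnn : ∀ i, 0 ≤ M i) (hMsum : ∑ i, M i = 1)
    (hISpos : ∀ i, 0 < IS i) (hISsum : ∑ i, IS i = 1)
    (hne : M ≠ IS)
    (xi₁ xi₂ : ℝ) (h1 : 0 < xi₁) (h12 : xi₁ < xi₂)
    (hpos : ∀ i, 0 < xi₂ * (M i - IS i) + IS i) :
    KL IS (fun i => xi₁ * (M i - IS i) + IS i) <
      KL IS (fun i => xi₂ * (M i - IS i) + IS i) :=
  stmt_10_general m M IS hMsum hISpos hISsum hne xi₁ xi₂ h1 h12 hpos
end

section
/- Let m ≥ 1 and let M, I_S : Fin m → ℝ be probability vectors with M ≠ I_S. Let ξ > 0 and suppose l̂_ξ i = ξ·(M i − I_S i) + I_S i > 0 for all i. Then Σ_i (−I_S i·(M i − I_S i)/l̂_ξ i) > 0; that is, the derivative with respect to ξ of the reverse KL-divergence D(I_S, l̂_ξ) is strictly positive. -/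
/-! Writing `d = M - I_S` and `l = ξ d + I_S`, each term `-I_S d / l` equals `ξ d² / l - d`.
The correction terms `-d` sum to zero because `M` and `I_S` have the same total mass, leaving
`Σ ξ d² / l`, which is positive because `ξ > 0`, `l > 0` and `d ≠ 0` somewhere. -/

open Finset

lemma neg_mul_sub_div_affine_eq {p q ξ : ℝ} (h : ξ * (p - q) + q ≠ 0) :
    -q * (p - q) / (ξ * (p - q) + q) = ξ * (p - q) ^ 2 / (ξ * (p - q) + q) - (p - q) := by
  rw [eq_sub_iff_add_eq, div_add' _ _ _ h, div_left_inj' h]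
  ring

lemma sum_neg_mul_sub_div_affine_pos {ι : Type*} [Fintype ι] {p q : ι → ℝ}
    (hsum : ∑ i, p i = ∑ i, q i) (hne : p ≠ q) {ξ : ℝ} (hξ : 0 < ξ)
    (hpos : ∀ i, 0 < ξ * (p i - q i) + q i) :
    0 < ∑ i, -q i * (p i - q i) / (ξ * (p i - q i) + q i) := by
  have hsq : ∑ i, -q i * (p i - q i) / (ξ * (p i - q i) + q i)
      = ∑ i, ξ * (p i - q i) ^ 2 / (ξ * (p i - q i) + q i) := by
    simp only [fun i => neg_mul_sub_div_affine_eq (hpos i).ne', sum_sub_distrib, hsum, sub_self,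
      sub_zero]
  obtain ⟨j, hj⟩ : ∃ j, p j ≠ q j := Function.ne_iff.mp hne
  rw [hsq]
  refine sum_pos' (fun i _ => div_nonneg (by positivity) (hpos i).le) ⟨j, mem_univ j, ?_⟩
  have : p j - q j ≠ 0 := sub_ne_zero_of_ne hj
  exact div_pos (by positivity) (hpos j)

theorem stmt_13_general (m : ℕ) (M IS : Fin m → ℝ)
    (hMsum : ∑ i, M i = 1)
    (hISsum : ∑ i, IS i = 1)
    (hne : M ≠ IS)
    (xi : ℝ) (hxi : 0 < xi)
    (l : Fin m → ℝ) (hl : ∀ i, l i = xi * (M i - IS i) + IS i)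
    (hlpos : ∀ i, 0 < l i) :
    0 < ∑ i, -(IS i) * (M i - IS i) / l i := by
  obtain rfl : l = fun i => xi * (M i - IS i) + IS i := funext hl
  exact sum_neg_mul_sub_div_affine_pos (hMsum.trans hISsum.symm) hne hxi hlpos

/-- the derivative with respect to `ξ` of the reverse KL-divergence
`D(I_S, l̂_ξ)`, namely `Σ_i (−I_S i·(M i − I_S i)/l̂_ξ i)`, is strictly positive. -/
theorem stmt_13 (m : ℕ) (hm : 1 ≤ m) (M IS : Fin m → ℝ)
    (hMnn : ∀ i, 0 ≤ M i) (hMsum : ∑ i, M i = 1)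
    (hISnn : ∀ i, 0 ≤ IS i) (hISsum : ∑ i, IS i = 1)
    (hne : M ≠ IS)
    (xi : ℝ) (hxi : 0 < xi)
    (l : Fin m → ℝ) (hl : ∀ i, l i = xi * (M i - IS i) + IS i)
    (hlpos : ∀ i, 0 < l i) :
    0 < ∑ i, -(IS i) * (M i - IS i) / l i :=
  stmt_13_general m M IS hMsum hISsum hne xi hxi l hl hlpos
end

section
/- (Proposition 4, maximum JS-divergence) Let m ≥ 1 and let M, I_S : Fin m → ℝ be probability vectors with I_S i > 0 for all i and M ≠ I_S. For ξ > 0 define l̂_ξ i = ξ·(M i − I_S i) + I_S i. If 0 < ξ₁ < ξ₂ and l̂_{ξ₂} i ≥ 0 for all i, then JS(l̂_{ξ₁}, I_S) < JS(l̂_{ξ₂}, I_S). Equivalently, as the coefficient λ̂ = 1/ξ decreases, the Jensen–Shannon divergence between DSM's output distribution and the seed irrelevance distribution strictly increases. -/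
/-- Jensen–Shannon divergence `JS(p,q) = ½ D(p, (p+q)/2) + ½ D(q, (p+q)/2)`. -/
noncomputable def JS {m : ℕ} (p q : Fin m → ℝ) : ℝ :=
  (1 / 2) * KL p (fun i => (p i + q i) / 2) + (1 / 2) * KL q (fun i => (p i + q i) / 2)

open Real Set InformationTheory

lemma mul_log_div_eq_mul_mul_log (x : ℝ) {y : ℝ} (hy : y ≠ 0) :
    x * log (x / y) = y * (x / y * log (x / y)) := by
  rw [← mul_assoc, mul_div_cancel₀ x hy]

theorem convexOn_mul_log_div :
    ConvexOn ℝ (Ici 0 ×ˢ Ioi 0) (fun p : ℝ × ℝ => p.1 * log (p.1 / p.2)) := by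
  refine ⟨(convex_Ici 0).prod (convex_Ioi 0), ?_⟩
  rintro ⟨x₁, y₁⟩ ⟨hx₁, hy₁⟩ ⟨x₂, y₂⟩ ⟨hx₂, hy₂⟩ a b ha hb hab
  have hy : a * y₁ + b * y₂ ∈ Ioi 0 := convex_Ioi 0 hy₁ hy₂ ha hb hab
  simp only [Prod.smul_mk, Prod.mk_add_mk, smul_eq_mul, mem_Ici, mem_Ioi] at *
  set y := a * y₁ + b * y₂
  have hw : a * y₁ / y + b * y₂ / y = 1 := by
    rw [← add_div, div_self hy.ne']
  have key := convexOn_mul_log.2 (mem_Ici.2 (div_nonneg hx₁ hy₁.le))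
    (mem_Ici.2 (div_nonneg hx₂ hy₂.le)) (by positivity) (by positivity) hw
  have hpoint : a * y₁ / y * (x₁ / y₁) + b * y₂ / y * (x₂ / y₂) = (a * x₁ + b * x₂) / y := by
    field_simp
  simp only [smul_eq_mul, hpoint] at key
  rw [mul_log_div_eq_mul_mul_log _ hy.ne', mul_log_div_eq_mul_mul_log x₁ hy₁.ne',
    mul_log_div_eq_mul_mul_log x₂ hy₂.ne']
  calc y * ((a * x₁ + b * x₂) / y * log ((a * x₁ + b * x₂) / y))
      ≤ y * (a * y₁ / y * (x₁ / y₁ * log (x₁ / y₁)) + b * y₂ / y * (x₂ / y₂ * log (x₂ / y₂))) :=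
        mul_le_mul_of_nonneg_left key hy.le
    _ = _ := by field_simp

noncomputable def jsTerm (x q : ℝ) : ℝ :=
  x * log (x / ((x + q) / 2)) + q * log (q / ((x + q) / 2))

lemma JS_eq_sum_jsTerm {m : ℕ} (p q : Fin m → ℝ) :
    JS p q = (1 / 2) * ∑ i, jsTerm (p i) (q i) := by
  simp only [JS, KL, jsTerm, Finset.sum_add_distrib]
  ring

lemma jsTerm_self (q : ℝ) : jsTerm q q = 0 := by
  simp [jsTerm]

lemma mul_klFun_div (x : ℝ) {r : ℝ} (hr : r ≠ 0) :
    r * klFun (x / r) = x * log (x / r) + r - x := by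
  rw [klFun_apply, mul_sub, mul_add, ← mul_assoc, mul_div_cancel₀ x hr]
  ring

lemma jsTerm_eq_klFun {x q : ℝ} (hr : (x + q) / 2 ≠ 0) :
    jsTerm x q =
      (x + q) / 2 * klFun (x / ((x + q) / 2)) + (x + q) / 2 * klFun (q / ((x + q) / 2)) := by
  rw [mul_klFun_div x hr, mul_klFun_div q hr, jsTerm]
  ring

lemma jsTerm_nonneg {x q : ℝ} (hx : 0 ≤ x) (hq : 0 < q) : 0 ≤ jsTerm x q := by
  have hr : 0 < (x + q) / 2 := by linarith
  rw [jsTerm_eq_klFun hr.ne']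
  have := klFun_nonneg (div_nonneg hx hr.le)
  have := klFun_nonneg (div_nonneg hq.le hr.le)
  positivity

lemma jsTerm_pos {x q : ℝ} (hx : 0 ≤ x) (hq : 0 < q) (hxq : x ≠ q) : 0 < jsTerm x q := by
  have hr : 0 < (x + q) / 2 := by linarith
  rw [jsTerm_eq_klFun hr.ne']
  have hklq : 0 < klFun (q / ((x + q) / 2)) := by
    refine (klFun_nonneg (by positivity)).lt_of_ne' fun h => hxq ?_
    rw [klFun_eq_zero_iff (by positivity), div_eq_one_iff_eq hr.ne'] at h
    linarith
  have := klFun_nonneg (div_nonneg hx hr.le)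
  positivity

lemma convexOn_jsTerm {q : ℝ} (hq : 0 < q) : ConvexOn ℝ (Ici 0) (jsTerm · q) := by
  refine ⟨convex_Ici 0, fun x hx y hy a b ha hb hab => ?_⟩
  simp only [mem_Ici, smul_eq_mul] at *
  have hmid : (a * x + b * y + q) / 2 = a * ((x + q) / 2) + b * ((y + q) / 2) := by
    linear_combination (-q / 2) * hab
  have hqq : q = a * q + b * q := by linear_combination -q * hab
  have hmem : ∀ {u v : ℝ}, 0 ≤ u → 0 ≤ v → (u, (v + q) / 2) ∈ Ici (0 : ℝ) ×ˢ Ioi 0 :=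
    fun hu hv => ⟨hu, by rw [mem_Ioi]; linarith⟩
  have h₁ := convexOn_mul_log_div.2 (hmem hx hx) (hmem hy hy) ha hb hab
  have h₂ := convexOn_mul_log_div.2 (hmem hq.le hx) (hmem hq.le hy) ha hb hab
  simp only [Prod.smul_mk, Prod.mk_add_mk, smul_eq_mul, ← hmid, ← hqq] at h₁ h₂
  simp only [jsTerm]
  linarith

lemma JS_convexComb_le {m : ℕ} {p q : Fin m → ℝ} (hp : ∀ i, 0 ≤ p i) (hq : ∀ i, 0 < q i)
    {t : ℝ} (ht₀ : 0 ≤ t) (ht₁ : t ≤ 1) :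
    JS (fun i => t * p i + (1 - t) * q i) q ≤ t * JS p q := by
  rw [JS_eq_sum_jsTerm, JS_eq_sum_jsTerm, mul_left_comm t, Finset.mul_sum Finset.univ _ t]
  gcongr with i
  simpa [jsTerm_self] using
    (convexOn_jsTerm (hq i)).2 (hp i) (mem_Ici.2 (hq i).le) ht₀ (sub_nonneg.2 ht₁) (by ring)

lemma JS_pos {m : ℕ} {p q : Fin m → ℝ} (hp : ∀ i, 0 ≤ p i) (hq : ∀ i, 0 < q i) (hpq : p ≠ q) :
    0 < JS p q := by
  obtain ⟨j, hj⟩ := Function.ne_iff.mp hpq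
  have hsum := Finset.sum_pos' (fun i _ => jsTerm_nonneg (hp i) (hq i))
    ⟨j, Finset.mem_univ j, jsTerm_pos (hp j) (hq j) hj⟩
  rw [JS_eq_sum_jsTerm]
  positivity

theorem stmt_14_general (m : ℕ) (M IS : Fin m → ℝ)
    (hISpos : ∀ i, 0 < IS i)
    (hne : M ≠ IS)
    (xi₁ xi₂ : ℝ) (h1 : 0 < xi₁) (h12 : xi₁ < xi₂)
    (hnn : ∀ i, 0 ≤ xi₂ * (M i - IS i) + IS i) :
    JS (fun i => xi₁ * (M i - IS i) + IS i) IS <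
      JS (fun i => xi₂ * (M i - IS i) + IS i) IS := by
  have h2 : 0 < xi₂ := h1.trans h12
  set t := xi₁ / xi₂
  have ht₁ : t < 1 := (div_lt_one h2).mpr h12
  have hsegment : (fun i => xi₁ * (M i - IS i) + IS i) =
      fun i => t * (xi₂ * (M i - IS i) + IS i) + (1 - t) * IS i := by
    funext i
    simp only [t]
    field_simp
    ring
  have hne₂ : (fun i => xi₂ * (M i - IS i) + IS i) ≠ IS := fun h =>
    hne (funext fun i => by simpa [h2.ne', sub_eq_zero] using congrFun h i)
  calc JS (fun i => xi₁ * (M i - IS i) + IS i) IS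
      ≤ t * JS (fun i => xi₂ * (M i - IS i) + IS i) IS := by
        rw [hsegment]
        exact JS_convexComb_le hnn hISpos (div_pos h1 h2).le ht₁.le
    _ < JS (fun i => xi₂ * (M i - IS i) + IS i) IS :=
        mul_lt_of_lt_one_left (JS_pos hnn hISpos hne₂) ht₁

/-- Proposition 4: as `λ̂ = 1/ξ` decreases (i.e. `ξ` increases), the
JS-divergence between DSM's output `l̂_ξ = ξ·(M − I_S) + I_S` and `I_S` strictly increases. -/
theorem stmt_14 (m : ℕ) (hm : 1 ≤ m) (M IS : Fin m → ℝ)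
    (hMnn : ∀ i, 0 ≤ M i) (hMsum : ∑ i, M i = 1)
    (hISpos : ∀ i, 0 < IS i) (hISsum : ∑ i, IS i = 1)
    (hne : M ≠ IS)
    (xi₁ xi₂ : ℝ) (h1 : 0 < xi₁) (h12 : xi₁ < xi₂)
    (hnn : ∀ i, 0 ≤ xi₂ * (M i - IS i) + IS i) :
    JS (fun i => xi₁ * (M i - IS i) + IS i) IS <
      JS (fun i => xi₂ * (M i - IS i) + IS i) IS :=
  stmt_14_general m M IS hISpos hne xi₁ xi₂ h1 h12 hnn
end

section
/- Let m ≥ 1 and let M, I_S : Fin m → ℝ be probability vectors with I_S i > 0 for all i and M ≠ I_S. Let ξ > 0 and suppose l̂_ξ i = ξ·(M i − I_S i) + I_S i > 0 for all i. Then Σ_i (M i − I_S i)·log(2·l̂_ξ i/(l̂_ξ i + I_S i)) > 0; that is, the derivative with respect to ξ of twice the JS-divergence, J(ξ) = 2·JS(l̂_ξ, I_S), is strictly positive. -/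
open Real Finset

/-! Each summand is nonnegative, and positive where `M i ≠ IS i`: since `l i - IS i = ξ (M i - IS i)`,
the factor `M i - IS i` has the sign of `l i - IS i`, and `log (2 l i / (l i + IS i))` has the sign of
`l i - IS i` as well. -/

theorem sub_mul_log_two_mul_div_add_pos {x y : ℝ} (hx : 0 < x) (hy : 0 < y) (hxy : x ≠ y) :
    0 < (x - y) * log (2 * x / (x + y)) := by
  have hxy' : 0 < x + y := add_pos hx hy
  rcases hxy.lt_or_gt with h | h
  · refine mul_pos_of_neg_of_neg (sub_neg.2 h) (log_neg (by positivity) ?_)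
    rw [div_lt_one hxy']
    linarith
  · refine mul_pos (sub_pos.2 h) (log_pos ?_)
    rw [one_lt_div hxy']
    linarith

theorem sub_mul_log_two_mul_div_add_nonneg {x y : ℝ} (hx : 0 < x) (hy : 0 < y) :
    0 ≤ (x - y) * log (2 * x / (x + y)) := by
  rcases eq_or_ne x y with rfl | hxy
  · simp
  · exact (sub_mul_log_two_mul_div_add_pos hx hy hxy).le

theorem stmt_16_general (m : ℕ) (M IS : Fin m → ℝ)
    (hISpos : ∀ i, 0 < IS i)
    (hne : M ≠ IS)
    (xi : ℝ) (hxi : 0 < xi)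
    (l : Fin m → ℝ) (hl : ∀ i, l i = xi * (M i - IS i) + IS i)
    (hlpos : ∀ i, 0 < l i) :
    0 < ∑ i, (M i - IS i) * Real.log (2 * l i / (l i + IS i)) := by
  have hlIS : ∀ i, l i - IS i = xi * (M i - IS i) := fun i => by rw [hl i]; ring
  have hsummand : ∀ i, (M i - IS i) * log (2 * l i / (l i + IS i)) =
      (l i - IS i) * log (2 * l i / (l i + IS i)) / xi := fun i => by
    rw [hlIS, mul_assoc, mul_div_cancel_left₀ _ hxi.ne']
  obtain ⟨j, hj⟩ := Function.ne_iff.1 hne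
  have hlj : l j ≠ IS j :=
    sub_ne_zero.1 (by rw [hlIS]; exact mul_ne_zero hxi.ne' (sub_ne_zero.2 hj))
  simp only [hsummand]
  refine sum_pos' (fun i _ => ?_) ⟨j, mem_univ j, ?_⟩
  · exact div_nonneg (sub_mul_log_two_mul_div_add_nonneg (hlpos i) (hISpos i)) hxi.le
  · exact div_pos (sub_mul_log_two_mul_div_add_pos (hlpos j) (hISpos j) hlj) hxi

/-- the derivative with respect to `ξ` of twice the JS-divergence
`J(ξ) = 2·JS(l̂_ξ, I_S)`, namely `Σ_i (M i − I_S i)·log(2·l̂_ξ i/(l̂_ξ i + I_S i))`,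
is strictly positive. -/
theorem stmt_16 (m : ℕ) (hm : 1 ≤ m) (M IS : Fin m → ℝ)
    (hMnn : ∀ i, 0 ≤ M i) (hMsum : ∑ i, M i = 1)
    (hISpos : ∀ i, 0 < IS i) (hISsum : ∑ i, IS i = 1)
    (hne : M ≠ IS)
    (xi : ℝ) (hxi : 0 < xi)
    (l : Fin m → ℝ) (hl : ∀ i, l i = xi * (M i - IS i) + IS i)
    (hlpos : ∀ i, 0 < l i) :
    0 < ∑ i, (M i - IS i) * Real.log (2 * l i / (l i + IS i)) :=
  stmt_16_general m M IS hISpos hne xi hxi l hl hlpos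
end

section
/- (Proposition 5, EM fixed point is a linear separation) Let V be a nonempty finite type (the vocabulary). Let c : V → ℝ satisfy c w ≥ 0 for all w and Σ_w c w > 0 (term counts in the feedback documents). Let 0 < λ ≤ 1 and let θ, pC : V → ℝ satisfy θ w > 0 and pC w ≥ 0 for all w, Σ_w θ w = 1 and Σ_w pC w = 1. Suppose θ is a fixed point of the EM iteration of the mixture model feedback approach, i.e., for every w, θ w = [ (λ·θ w / (λ·θ w + (1 − λ)·pC w)) · c w ] / [ Σ_{w*} (λ·θ w* / (λ·θ w* + (1 − λ)·pC w*)) · c w* ]. Then for every w, λ·θ w + (1 − λ)·pC w = c w / Σ_{w*} c w*; that is, the mixture term-frequency distribution of the feedback documents is exactly the linear combination, with coefficient λ, of the EM output model θ and the collection model pC. -/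
/-!
Cancelling `θ w` in the fixed-point equation shows that the mixture `λ θ + (1 - λ) p_C` is
proportional to the counts `c`; since the mixture is a probability distribution, it must be
`c` normalized.
-/

open Finset

theorem eq_div_mul_of_eq_mul_div_mul_div {K : Type*} [Field K] {a k m c S : K} (ha : a ≠ 0)
    (h : a = k * a / m * c / S) : m = k / S * c := by
  have hS : S ≠ 0 := by
    rintro rfl
    exact ha (by simpa using h)
  have hm : m ≠ 0 := by
    rintro rfl
    exact ha (by simpa using h)
  field_simp at h ⊢
  exact h

theorem eq_div_sum_of_sum_eq_one_of_eq_mul {ι K : Type*} [Fintype ι] [Field K] {m c : ι → K}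
    {t : K} (hm : ∑ i, m i = 1) (hmc : ∀ i, m i = t * c i) (i : ι) :
    m i = c i / ∑ j, c j := by
  have ht : t * ∑ j, c j = 1 := by
    rw [mul_sum, ← hm]
    exact sum_congr rfl fun j _ => (hmc j).symm
  rw [eq_div_iff (right_ne_zero_of_mul_eq_one ht), hmc]
  linear_combination c i * ht

theorem stmt_17_general (V : Type*) [Fintype V]
    (c : V → ℝ)
    (lam : ℝ)
    (theta pC : V → ℝ)
    (hth : ∀ w, 0 < theta w)
    (hthsum : ∑ w, theta w = 1) (hpCsum : ∑ w, pC w = 1)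
    (hfix : ∀ w, theta w =
      (lam * theta w / (lam * theta w + (1 - lam) * pC w) * c w) /
        ∑ w', lam * theta w' / (lam * theta w' + (1 - lam) * pC w') * c w') :
    ∀ w, lam * theta w + (1 - lam) * pC w = c w / ∑ w', c w' := by
  have hmix : ∑ w, (lam * theta w + (1 - lam) * pC w) = 1 := by
    simp only [sum_add_distrib, ← mul_sum, hthsum, hpCsum]
    ring
  exact eq_div_sum_of_sum_eq_one_of_eq_mul hmix fun w =>
    eq_div_mul_of_eq_mul_div_mul_div (hth w).ne' (hfix w)

/-- Proposition 5: a fixed point of the EM iteration of the Mixture Model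
Feedback approach satisfies the linear-combination (distribution separation) identity
`λ·θ w + (1 − λ)·pC w = c w / Σ_{w*} c w*` for every term `w`. -/
theorem stmt_17 (V : Type*) [Fintype V] [Nonempty V]
    (c : V → ℝ) (hcnn : ∀ w, 0 ≤ c w) (hcpos : 0 < ∑ w, c w)
    (lam : ℝ) (hlam0 : 0 < lam) (hlam1 : lam ≤ 1)
    (theta pC : V → ℝ)
    (hth : ∀ w, 0 < theta w) (hpC : ∀ w, 0 ≤ pC w)
    (hthsum : ∑ w, theta w = 1) (hpCsum : ∑ w, pC w = 1)
    (hfix : ∀ w, theta w =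
      (lam * theta w / (lam * theta w + (1 - lam) * pC w) * c w) /
        ∑ w', lam * theta w' / (lam * theta w' + (1 - lam) * pC w') * c w') :
    ∀ w, lam * theta w + (1 - lam) * pC w = c w / ∑ w', c w' :=
  stmt_17_general V c lam theta pC hth hthsum hpCsum hfix
end

section
/- Let V be a nonempty finite type, c : V → ℝ with c w ≥ 0 for all w and Σ_w c w > 0, 0 < λ ≤ 1, and θ, pC : V → ℝ with θ w > 0 and pC w ≥ 0 for all w, Σ_w θ w = 1 and Σ_w pC w = 1. If θ satisfies the EM fixed-point equation θ w = [ (λ·θ w / (λ·θ w + (1 − λ)·pC w)) · c w ] / [ Σ_{w*} (λ·θ w* / (λ·θ w* + (1 − λ)·pC w*)) · c w* ] for all w, then the EM normalizer satisfies Σ_{w*} (λ·θ w* / (λ·θ w* + (1 − λ)·pC w*)) · c w* = λ · Σ_{w*} c w*. -/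
/-!
At a fixed point, `θ w · S = λ θ w c w / (λ θ w + (1 - λ) p_C w)` for every `w`, where `S` is the
normalizer; cancelling `θ w > 0` gives `S · (λ θ w + (1 - λ) p_C w) = λ c w`. Summing over `w`, the
left side is `S` times the total mass of the mixture `λ θ + (1 - λ) p_C`, which is `1`.
-/

open Finset

/-- Neither `d` nor `S` can vanish: division by `0` would make the right side `0 ≠ x`. -/
lemma mul_eq_mul_of_eq_mul_div_mul_div {x k d c S : ℝ} (hx : x ≠ 0)
    (h : x = k * x / d * c / S) : S * d = k * c := by
  have hS : S ≠ 0 := by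
    rintro rfl
    exact hx (by simpa using h)
  have hd : d ≠ 0 := by
    rintro rfl
    exact hx (by simpa using h)
  field_simp at h
  linear_combination h

lemma sum_mixture_eq_one {V : Type*} [Fintype V] (lam : ℝ) {p q : V → ℝ}
    (hp : ∑ w, p w = 1) (hq : ∑ w, q w = 1) :
    ∑ w, (lam * p w + (1 - lam) * q w) = 1 := by
  rw [sum_add_distrib, ← mul_sum, ← mul_sum, hp, hq]
  ring

theorem stmt_18_general (V : Type*) [Fintype V]
    (c : V → ℝ)
    (lam : ℝ)
    (theta pC : V → ℝ)
    (hth : ∀ w, 0 < theta w)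
    (hthsum : ∑ w, theta w = 1) (hpCsum : ∑ w, pC w = 1)
    (hfix : ∀ w, theta w =
      (lam * theta w / (lam * theta w + (1 - lam) * pC w) * c w) /
        ∑ w', lam * theta w' / (lam * theta w' + (1 - lam) * pC w') * c w') :
    ∑ w', lam * theta w' / (lam * theta w' + (1 - lam) * pC w') * c w' =
      lam * ∑ w', c w' := by
  set S := ∑ w', lam * theta w' / (lam * theta w' + (1 - lam) * pC w') * c w'
  have hnormalizer_mul_denom : ∀ w, S * (lam * theta w + (1 - lam) * pC w) = lam * c w := fun w =>
    mul_eq_mul_of_eq_mul_div_mul_div (hth w).ne' (hfix w)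
  calc S = S * ∑ w, (lam * theta w + (1 - lam) * pC w) := by
        rw [sum_mixture_eq_one lam hthsum hpCsum, mul_one]
    _ = ∑ w, lam * c w := by rw [mul_sum]; exact sum_congr rfl fun w _ => hnormalizer_mul_denom w
    _ = lam * ∑ w, c w := (mul_sum ..).symm

/-- at an EM fixed point of the Mixture Model Feedback approach, the M-step
normalizer equals `λ · Σ_{w*} c w*`. -/
theorem stmt_18 (V : Type*) [Fintype V] [Nonempty V]
    (c : V → ℝ) (hcnn : ∀ w, 0 ≤ c w) (hcpos : 0 < ∑ w, c w)
    (lam : ℝ) (hlam0 : 0 < lam) (hlam1 : lam ≤ 1)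
    (theta pC : V → ℝ)
    (hth : ∀ w, 0 < theta w) (hpC : ∀ w, 0 ≤ pC w)
    (hthsum : ∑ w, theta w = 1) (hpCsum : ∑ w, pC w = 1)
    (hfix : ∀ w, theta w =
      (lam * theta w / (lam * theta w + (1 - lam) * pC w) * c w) /
        ∑ w', lam * theta w' / (lam * theta w' + (1 - lam) * pC w') * c w') :
    ∑ w', lam * theta w' / (lam * theta w' + (1 - lam) * pC w') * c w' =
      lam * ∑ w', c w' :=
  stmt_18_general V c lam theta pC hth hthsum hpCsum hfix
end
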